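/- arXiv:2505.16284 — 3 statements merged into one kernel-verified Lean document; each statement's English description precedes it below -/
import Mathlib

section
/- Let a, b ∈ R^n with |b_i| ≤ ε for all i. Then ‖softmax(a+b) − softmax(a)‖_∞ ≤ 2(e^ε − 1), where softmax(x)_i = exp(x_i)/Σ_j exp(x_j). -/
lemma softmax_key (x d ε : ℝ) (hd : |d| ≤ ε) :
    |Real.exp (x + d) - Real.exp x| ≤ Real.exp (x + d) * (Real.exp ε - 1) := by
  obtain ⟨h1, h2⟩ := abs_le.mp hd
  have hx : Real.exp x = Real.exp (x + d) * Real.exp (-d) := by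
    rw [← Real.exp_add]; ring_nf
  have habs : |1 - Real.exp (-d)| ≤ Real.exp ε - 1 := by
    rw [abs_le]
    have e1 : Real.exp (-d) ≤ Real.exp ε := Real.exp_le_exp.mpr (by linarith)
    have e2 : Real.exp (-ε) ≤ Real.exp (-d) := Real.exp_le_exp.mpr (by linarith)
    have e3 : ε + 1 ≤ Real.exp ε := Real.add_one_le_exp ε
    have e4 : -ε + 1 ≤ Real.exp (-ε) := Real.add_one_le_exp (-ε)
    constructor <;> nlinarith
  calc |Real.exp (x + d) - Real.exp x|
      = Real.exp (x + d) * |1 - Real.exp (-d)| := by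
        rw [hx, ← mul_one_sub, abs_mul, abs_of_pos (Real.exp_pos (x + d))]
    _ ≤ Real.exp (x + d) * (Real.exp ε - 1) := by
        exact mul_le_mul_of_nonneg_left habs (Real.exp_pos _).le

/-- Softmax stability: ‖softmax(a+b) − softmax(a)‖_∞ ≤ 2(e^ε − 1). -/
theorem softmax_perturb (n : ℕ) (a b : Fin n → ℝ) (ε : ℝ)
    (hb : ∀ i, |b i| ≤ ε) :
    ∀ i, |Real.exp (a i + b i) / (∑ j, Real.exp (a j + b j)) -
           Real.exp (a i) / (∑ j, Real.exp (a j))| ≤ 2 * (Real.exp ε - 1) := by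
  intro i
  have hne : Nonempty (Fin n) := ⟨i⟩
  set S : ℝ := ∑ j, Real.exp (a j) with hSdef
  set S' : ℝ := ∑ j, Real.exp (a j + b j) with hS'def
  have hS : 0 < S := Finset.sum_pos (fun j _ => Real.exp_pos _) Finset.univ_nonempty
  have hS' : 0 < S' := Finset.sum_pos (fun j _ => Real.exp_pos _) Finset.univ_nonempty
  have hε0 : 0 ≤ Real.exp ε - 1 := by
    have : (0:ℝ) ≤ ε := le_trans (abs_nonneg _) (hb i)
    nlinarith [Real.add_one_le_exp ε]
  have hsum : |S - S'| ≤ S' * (Real.exp ε - 1) := by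
    have : |S - S'| = |∑ j, (Real.exp (a j) - Real.exp (a j + b j))| := by
      rw [Finset.sum_sub_distrib]
    rw [this]
    calc |∑ j, (Real.exp (a j) - Real.exp (a j + b j))|
        ≤ ∑ j, |Real.exp (a j) - Real.exp (a j + b j)| :=
          Finset.abs_sum_le_sum_abs _ _
      _ ≤ ∑ j, Real.exp (a j + b j) * (Real.exp ε - 1) := by
          apply Finset.sum_le_sum
          intro j _
          rw [abs_sub_comm]
          exact softmax_key _ _ _ (hb j)
      _ = S' * (Real.exp ε - 1) := by rw [← Finset.sum_mul]
  have hi1 : Real.exp (a i + b i) ≤ S' :=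
    Finset.single_le_sum (f := fun j => Real.exp (a j + b j))
      (fun j _ => (Real.exp_pos (a j + b j)).le) (Finset.mem_univ i)
  have hi2 : Real.exp (a i) ≤ S :=
    Finset.single_le_sum (f := fun j => Real.exp (a j))
      (fun j _ => (Real.exp_pos (a j)).le) (Finset.mem_univ i)
  have hdecomp : Real.exp (a i + b i) / S' - Real.exp (a i) / S
      = (Real.exp (a i + b i) - Real.exp (a i)) / S'
        + Real.exp (a i) * (S - S') / (S * S') := by
    field_simp
    ring
  rw [hdecomp]
  have ht1 : |(Real.exp (a i + b i) - Real.exp (a i)) / S'| ≤ Real.exp ε - 1 := by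
    rw [abs_div, abs_of_pos hS', div_le_iff₀ hS']
    calc |Real.exp (a i + b i) - Real.exp (a i)|
        ≤ Real.exp (a i + b i) * (Real.exp ε - 1) := softmax_key _ _ _ (hb i)
      _ ≤ (Real.exp ε - 1) * S' := by nlinarith
  have ht2 : |Real.exp (a i) * (S - S') / (S * S')| ≤ Real.exp ε - 1 := by
    rw [abs_div, abs_mul, abs_of_pos (Real.exp_pos _), abs_of_pos (mul_pos hS hS'),
      div_le_iff₀ (mul_pos hS hS')]
    calc Real.exp (a i) * |S - S'|
        ≤ Real.exp (a i) * (S' * (Real.exp ε - 1)) :=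
          mul_le_mul_of_nonneg_left hsum (Real.exp_pos _).le
      _ ≤ (Real.exp ε - 1) * (S * S') := by nlinarith [mul_le_mul_of_nonneg_right hi2 (mul_nonneg hS'.le hε0)]
  calc |(Real.exp (a i + b i) - Real.exp (a i)) / S'
        + Real.exp (a i) * (S - S') / (S * S')|
      ≤ |(Real.exp (a i + b i) - Real.exp (a i)) / S'|
        + |Real.exp (a i) * (S - S') / (S * S')| := abs_add_le _ _
    _ ≤ 2 * (Real.exp ε - 1) := by linarith
end

section
/- Let a, b ∈ R^n with ‖b‖_∞ ≤ 1. Then ‖softmax(a+b) − softmax(a)‖_∞ ≤ 4‖b‖_∞. -/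
/-- Softmax Lipschitz bound: if ‖b‖_∞ ≤ 1 then
‖softmax(a+b) − softmax(a)‖_∞ ≤ 4‖b‖_∞. -/
theorem softmax_lipschitz (n : ℕ) (a b : Fin n → ℝ)
    (hb : (⨆ i, |b i|) ≤ 1) :
    ∀ i, |Real.exp (a i + b i) / (∑ j, Real.exp (a j + b j)) -
           Real.exp (a i) / (∑ j, Real.exp (a j))| ≤ 4 * (⨆ i, |b i|) := by
  intro i
  set M := ⨆ i, |b i| with hMdef
  have hbdd : BddAbove (Set.range fun i => |b i|) :=
    Set.Finite.bddAbove (Set.finite_range _)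
  have hle : ∀ j, |b j| ≤ M := fun j => le_ciSup hbdd j
  have hM0 : 0 ≤ M := le_trans (abs_nonneg _) (hle i)
  have hs : 0 < ∑ j, Real.exp (a j) :=
    Finset.sum_pos (fun j _ => Real.exp_pos _) ⟨i, Finset.mem_univ i⟩
  have hs' : 0 < ∑ j, Real.exp (a j + b j) :=
    Finset.sum_pos (fun j _ => Real.exp_pos _) ⟨i, Finset.mem_univ i⟩
  set p := Real.exp (a i) / ∑ j, Real.exp (a j) with hpdef
  set p' := Real.exp (a i + b i) / ∑ j, Real.exp (a j + b j) with hp'def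
  have hp0 : 0 ≤ p := div_nonneg (Real.exp_pos _).le hs.le
  have hp'0 : 0 ≤ p' := div_nonneg (Real.exp_pos _).le hs'.le
  have hp1 : p ≤ 1 := by
    rw [hpdef, div_le_one hs]
    exact Finset.single_le_sum (fun j _ => (Real.exp_pos (a j)).le) (Finset.mem_univ i)
  have hp'1 : p' ≤ 1 := by
    rw [hp'def, div_le_one hs']
    exact Finset.single_le_sum (fun j _ => (Real.exp_pos (a j + b j)).le) (Finset.mem_univ i)
  have hsum_le : (∑ j, Real.exp (a j + b j)) ≤ Real.exp M * ∑ j, Real.exp (a j) := by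
    rw [Finset.mul_sum]
    refine Finset.sum_le_sum fun j _ => ?_
    rw [← Real.exp_add]
    exact Real.exp_le_exp.2 (by linarith [(abs_le.1 (hle j)).2])
  have hsum_ge : Real.exp (-M) * ∑ j, Real.exp (a j) ≤ ∑ j, Real.exp (a j + b j) := by
    rw [Finset.mul_sum]
    refine Finset.sum_le_sum fun j _ => ?_
    rw [← Real.exp_add]
    exact Real.exp_le_exp.2 (by linarith [(abs_le.1 (hle j)).1])
  have hbi := abs_le.1 (hle i)
  have key1 : Real.exp (-(2 * M)) * p ≤ p' := by
    rw [hpdef, hp'def, mul_div_assoc', div_le_div_iff₀ hs hs']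
    calc Real.exp (-(2 * M)) * Real.exp (a i) * (∑ j, Real.exp (a j + b j))
        ≤ Real.exp (-(2 * M)) * Real.exp (a i) * (Real.exp M * ∑ j, Real.exp (a j)) := by
          apply mul_le_mul_of_nonneg_left hsum_le
          positivity
      _ = Real.exp (a i - M) * ∑ j, Real.exp (a j) := by
          rw [← mul_assoc, ← Real.exp_add, ← Real.exp_add]; congr 1; ring
      _ ≤ Real.exp (a i + b i) * ∑ j, Real.exp (a j) := by
          apply mul_le_mul_of_nonneg_right _ hs.le
          exact Real.exp_le_exp.2 (by linarith [hbi.1])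
  have key2 : Real.exp (-(2 * M)) * p' ≤ p := by
    rw [hpdef, hp'def, mul_div_assoc', div_le_div_iff₀ hs' hs]
    calc Real.exp (-(2 * M)) * Real.exp (a i + b i) * (∑ j, Real.exp (a j))
        ≤ Real.exp (-(2 * M)) * Real.exp (a i + b i) * (Real.exp M * ∑ j, Real.exp (a j + b j)) := by
          apply mul_le_mul_of_nonneg_left _ (by positivity)
          calc (∑ j, Real.exp (a j)) = Real.exp M * (Real.exp (-M) * ∑ j, Real.exp (a j)) := by
                rw [← mul_assoc, ← Real.exp_add]; simp
            _ ≤ Real.exp M * ∑ j, Real.exp (a j + b j) :=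
                mul_le_mul_of_nonneg_left hsum_ge (Real.exp_pos M).le
      _ = Real.exp (a i + b i - M) * ∑ j, Real.exp (a j + b j) := by
          rw [← mul_assoc, ← Real.exp_add, ← Real.exp_add]; congr 1; ring
      _ ≤ Real.exp (a i) * ∑ j, Real.exp (a j + b j) := by
          apply mul_le_mul_of_nonneg_right _ hs'.le
          exact Real.exp_le_exp.2 (by linarith [hbi.2])
  have hexp : 1 - 2 * M ≤ Real.exp (-(2 * M)) := by
    have := Real.add_one_le_exp (-(2 * M)); linarith
  rw [abs_le]
  constructor <;> nlinarith [Real.exp_pos (-(2 * M))]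
end

section
/- Let A, E ∈ R^{n×n}, let à = A − E, let P and P̃ be the row-wise softmax of A and à respectively, and let D ∈ R^{n×n} be the diagonal matrix with D_{i,i} = max_{j,l} |E_{i,j} − E_{i,l}|. Then for all i, j: e^{−D_{i,i}} P̃_{i,j} ≤ P_{i,j} ≤ e^{D_{i,i}} P̃_{i,j}. -/
/-- Perturbation of the row-wise softmax matrix: with à = A − E and
D_{i,i} = max_{j,l} |E_{i,j} − E_{i,l}|, we have
e^{−D_{i,i}} P̃_{i,j} ≤ P_{i,j} ≤ e^{D_{i,i}} P̃_{i,j}. -/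
theorem softmax_matrix_perturb (n : ℕ) (A E : Matrix (Fin n) (Fin n) ℝ)
    (Atil : Matrix (Fin n) (Fin n) ℝ) (hAtil : Atil = A - E)
    (P Ptil : Matrix (Fin n) (Fin n) ℝ)
    (hP : ∀ i j, P i j = Real.exp (A i j) / ∑ l, Real.exp (A i l))
    (hPtil : ∀ i j, Ptil i j = Real.exp (Atil i j) / ∑ l, Real.exp (Atil i l))
    (D : Fin n → ℝ) (hD : ∀ i, D i = ⨆ j, ⨆ l, |E i j - E i l|) :
    ∀ i j, Real.exp (-(D i)) * Ptil i j ≤ P i j ∧ P i j ≤ Real.exp (D i) * Ptil i j := by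
  intro i j
  have : Nonempty (Fin n) := ⟨j⟩
  have hDle : ∀ a b : Fin n, |E i a - E i b| ≤ D i := by
    intro a b
    rw [hD]
    calc |E i a - E i b| ≤ ⨆ l, |E i a - E i l| :=
          le_ciSup (f := fun l => |E i a - E i l|) (Set.Finite.bddAbove (Set.finite_range _)) b
      _ ≤ ⨆ j, ⨆ l, |E i j - E i l| :=
          le_ciSup (f := fun a => ⨆ l, |E i a - E i l|)
            (Set.Finite.bddAbove (Set.finite_range _)) a
  have hS : (0:ℝ) < ∑ l, Real.exp (A i l) :=
    Finset.sum_pos (fun l _ => Real.exp_pos _) Finset.univ_nonempty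
  have hSt : (0:ℝ) < ∑ l, Real.exp (Atil i l) :=
    Finset.sum_pos (fun l _ => Real.exp_pos _) Finset.univ_nonempty
  have hAt : ∀ a b : Fin n, Atil a b = A a b - E a b := by
    intro a b; rw [hAtil]; rfl
  constructor
  · rw [hP, hPtil, ← mul_div_assoc, div_le_div_iff₀ hSt hS]
    simp only [Finset.mul_sum, Finset.sum_mul]
    apply Finset.sum_le_sum
    intro l _
    rw [hAt, hAt, ← Real.exp_add, ← Real.exp_add, ← Real.exp_add]
    apply Real.exp_le_exp.2
    have := hDle l j
    have h2 := abs_le.1 this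
    linarith [h2.1]
  · rw [hP, hPtil, ← mul_div_assoc, div_le_div_iff₀ hS hSt]
    simp only [Finset.mul_sum, Finset.sum_mul]
    apply Finset.sum_le_sum
    intro l _
    rw [hAt, hAt, ← Real.exp_add, ← Real.exp_add, ← Real.exp_add]
    apply Real.exp_le_exp.2
    have h2 := abs_le.1 (hDle j l)
    linarith [h2.2]
end
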